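/- arXiv:2504.19304 — 5 statements merged into one kernel-verified Lean document; each statement's English description precedes it below -/
import Mathlib

section
/- Let F be a field and C, D ⊆ F^n be nonzero linear subspaces. Then dim(C*D) ≥ dim C + dim D − dim St(C*D), where C*D is the span of all coordinatewise products c*d with c ∈ C and d ∈ D, and St(E) = {x ∈ F^n : x*E ⊆ E}. -/
open Submodule

/-- The (Schur / coordinatewise) product of two subspaces of `Fin n → K`. -/
def schurMul {K : Type*} [CommRing K] {n : ℕ} (C D : Submodule K (Fin n → K)) :
    Submodule K (Fin n → K) :=
  Submodule.span K {x | ∃ c ∈ C, ∃ d ∈ D, x = c * d}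

/-- `schurPow C k` is the `(k+1)`-st Schur power `C^⟨k+1⟩`; so `schurPow C 0 = C^⟨1⟩ = C`. -/
def schurPow {K : Type*} [CommRing K] {n : ℕ} (C : Submodule K (Fin n → K)) :
    ℕ → Submodule K (Fin n → K)
  | 0 => C
  | k + 1 => schurMul (schurPow C k) C

/-- The stabiliser `St(E) = {x : x * E ⊆ E}` of a subspace, itself a subspace. -/
def stab {K : Type*} [CommRing K] {n : ℕ} (E : Submodule K (Fin n → K)) :
    Submodule K (Fin n → K) where
  carrier := {x | ∀ e ∈ E, x * e ∈ E}
  add_mem' := fun {a b} ha hb e he => by simpa [add_mul] using E.add_mem (ha e he) (hb e he)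
  zero_mem' := fun e he => by simp
  smul_mem' := fun c {x} hx e he => by simpa [smul_mul_assoc] using E.smul_mem c (hx e he)

/-- Support of a subspace of `Fin n → K`. -/
def suppS {K : Type*} [CommRing K] {n : ℕ} (C : Submodule K (Fin n → K)) : Set (Fin n) :=
  {i | ∃ v ∈ C, v i ≠ 0}

/-- Characteristic vector of a finite set. -/
def charVec (R : Type*) [Zero R] [One R] {n : ℕ} (A : Finset (Fin n)) : Fin n → R :=
  fun i => if i ∈ A then 1 else 0

/-- `𝓕` is `k`-wise `ℓ`-divisible: every intersection of `k` (not necessarily distinct)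
members of `𝓕` has cardinality divisible by `ℓ`. -/
def kWiseDiv (n k ℓ : ℕ) (𝓕 : Finset (Finset (Fin n))) : Prop :=
  ∀ A : Fin k → Finset (Fin n), (∀ i, A i ∈ 𝓕) → ℓ ∣ (Finset.univ.inf A).card

/-- Support of a set family. -/
def famSupp {n : ℕ} (ℱ : Set (Finset (Fin n))) : Set (Fin n) :=
  ⋃ B ∈ ℱ, (B : Set (Fin n))

/-- `A` is an atom of the family `ℱ`: a nonempty subset of the support such that every
member of `ℱ` contains `A` or is disjoint from it, maximal with this property. -/
def IsAtomOf {n : ℕ} (ℱ : Set (Finset (Fin n))) (A : Finset (Fin n)) : Prop :=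
  A.Nonempty ∧ (A : Set (Fin n)) ⊆ famSupp ℱ ∧ (∀ B ∈ ℱ, A ⊆ B ∨ Disjoint A B) ∧
    ∀ A' : Finset (Fin n), A ⊆ A' → (A' : Set (Fin n)) ⊆ famSupp ℱ →
      (∀ B ∈ ℱ, A' ⊆ B ∨ Disjoint A' B) → A' = A

/-- The family `ℱ^r` of all `r`-fold intersections of members of `ℱ`. -/
def interFam {n : ℕ} (ℱ : Set (Finset (Fin n))) (r : ℕ) : Set (Finset (Fin n)) :=
  {S | ∃ f : Fin r → Finset (Fin n), (∀ i, f i ∈ ℱ) ∧ S = Finset.univ.inf f}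

/-- The linear map sending `v` to its restriction (indicator) on a coordinate set `S`. -/
noncomputable def indicatorMapL {K : Type*} [CommRing K] {n : ℕ} (S : Set (Fin n)) :
    (Fin n → K) →ₗ[K] (Fin n → K) where
  toFun v := S.indicator v
  map_add' a b := by
    funext i; by_cases h : i ∈ S <;> simp [Set.indicator_apply, h]
  map_smul' c a := by
    funext i; by_cases h : i ∈ S <;> simp [Set.indicator_apply, h]

/-- Restriction (projection) of a subspace `V` to the coordinates in `S`. -/
noncomputable def restrTo {K : Type*} [CommRing K] {n : ℕ} (S : Set (Fin n))
    (V : Submodule K (Fin n → K)) : Submodule K (Fin n → K) :=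
  V.map (indicatorMapL S)

/-!
Write `St(E)` as the colon `E / E = {x | x * E ≤ E}` and argue by induction on `dim D`.
If `C * D = 0` then `C ⊓ D = 0`, since `x * x = 0` forces `x = 0`, so
`dim C + dim D ≤ n = dim St(0)`. Otherwise choose a coordinate `i` at which `E = C * D` does not
vanish, `g ∈ D` with `g i ≠ 0`, and the hyperplane section `W = {d ∈ D | d i = 0}`, so that
`E₁ = C * W` is a proper subspace of `E`. Put `H = St(E₁)` and `M = H * C`; then `M * W = E₁`,
and the induction hypothesis for `(M, W)` gives `dim M + dim W ≤ dim E₁ + dim H`. Multiplication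
by `g` embeds `C` modulo `{c | g c ∈ E₁}` into `E` modulo `E₁`. As `H` contains the indicator of
each of its blocks, the `H`-module `M` modulo `N = {m ∈ M | g m ∈ E₁}` has dimension at least
`dim H - dim Ann`; and every `h ∈ Ann` satisfies `h E ⊆ E₁`, so `Ann` is a subspace of `St(E)`
missing `1`. Adding up gives `dim C + dim D ≤ dim E + dim St(E)`.
-/

open Submodule Module

namespace Submodule

section RankNullity

variable {K V W : Type*} [Field K] [AddCommGroup V] [Module K V] [AddCommGroup W] [Module K W]

theorem le_inf_ker_sup_span_singleton {D : Submodule K V} (φ : V →ₗ[K] K) {g : V}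
    (hg : g ∈ D) (hφg : φ g ≠ 0) : D ≤ D ⊓ LinearMap.ker φ ⊔ K ∙ g := by
  intro d hd
  have hdW : d - (φ d / φ g) • g ∈ D ⊓ LinearMap.ker φ :=
    ⟨D.sub_mem hd (D.smul_mem _ hg), by simp [hφg]⟩
  have hg' : (φ d / φ g) • g ∈ K ∙ g := smul_mem _ _ (mem_span_singleton_self g)
  simpa using add_mem (mem_sup_left hdW) (mem_sup_right hg')

variable [FiniteDimensional K V]

theorem finrank_map_add_finrank_inf_ker (p : Submodule K V) (f : V →ₗ[K] W) :
    finrank K (p.map f) + finrank K ↥(p ⊓ LinearMap.ker f) = finrank K p := by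
  rw [← (f.domRestrict p).finrank_range_add_finrank_ker, LinearMap.range_domRestrict,
    LinearMap.ker_domRestrict, ← finrank_map_subtype_eq, map_comap_subtype]

theorem finrank_inf_ker_add_one {D : Submodule K V} (φ : V →ₗ[K] K) {d : V}
    (hd : d ∈ D) (hφd : φ d ≠ 0) : finrank K ↥(D ⊓ LinearMap.ker φ) + 1 = finrank K D := by
  have hmap : finrank K (D.map φ) = 1 := by
    refine le_antisymm ((finrank_le _).trans (finrank_self K).le) ?_
    exact one_le_finrank_iff.mpr fun h ↦ hφd <| by
      simpa [h] using mem_map_of_mem (f := φ) hd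
  rw [← D.finrank_map_add_finrank_inf_ker φ, hmap, add_comm]

theorem finrank_add_finrank_le_of_map_le [FiniteDimensional K W] {p : Submodule K V}
    {E₁ E : Submodule K W} (f : V →ₗ[K] W) (hE₁ : E₁ ≤ E) (hpE : p.map f ≤ E) :
    finrank K E₁ + finrank K p ≤ finrank K E + finrank K ↥(p ⊓ E₁.comap f) := by
  have hp := p.finrank_map_add_finrank_inf_ker (E₁.mkQ ∘ₗ f)
  have hE := E.finrank_map_add_finrank_inf_ker E₁.mkQ
  rw [LinearMap.ker_comp, ker_mkQ] at hp
  rw [ker_mkQ, inf_eq_right.mpr hE₁] at hE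
  have hle : finrank K (p.map (E₁.mkQ ∘ₗ f)) ≤ finrank K (E.map E₁.mkQ) := by
    rw [map_comp]
    exact finrank_mono (map_mono hpE)
  omega

end RankNullity

section Stabilizer

variable {K A : Type*} [Field K] [CommRing A] [Algebra K A]

theorem mul_mem_div_self {E : Submodule K A} {x y : A} (hx : x ∈ E / E) (hy : y ∈ E / E) :
    x * y ∈ E / E :=
  mem_div_iff_forall_mul_mem.mpr fun z hz ↦ by rw [mul_assoc]; exact hx _ (hy z hz)

def stabilizerSubalgebra (E : Submodule K A) : Subalgebra K A :=
  (E / E).toSubalgebra (one_mem_div.mpr le_rfl) fun _ _ ↦ mul_mem_div_self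

theorem toSubmodule_stabilizerSubalgebra (E : Submodule K A) :
    Subalgebra.toSubmodule E.stabilizerSubalgebra = E / E :=
  toSubalgebra_toSubmodule ..

theorem div_self_mul_self (E : Submodule K A) : E / E * E = E :=
  le_antisymm (le_div_iff_mul_le.mp le_rfl) <| by
    simpa using mul_le_mul' (one_le.mpr (one_mem_div.mpr le_rfl)) (le_refl E)

theorem div_lt_div_self {E₁ E : Submodule K A} (h : E₁ < E) : E₁ / E < E / E :=
  SetLike.lt_iff_le_and_exists.mpr
    ⟨fun _ hx y hy ↦ h.le (hx y hy), 1, one_mem_div.mpr le_rfl, mt one_mem_div.mp h.not_ge⟩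

theorem mem_div_mul_of_le_sup_span_singleton {C D W : Submodule K A} {g h : A}
    (hD : D ≤ W ⊔ K ∙ g) (hh : h ∈ C * W / (C * W)) (hgh : ∀ c ∈ C, g * (h * c) ∈ C * W) :
    h ∈ C * W / (C * D) := by
  suffices C * D ≤ (C * W).comap (LinearMap.mulLeft K h) from fun y hy ↦ this hy
  refine mul_le.mpr fun c hc d hd ↦ ?_
  obtain ⟨w, hw, _, hy, rfl⟩ := mem_sup.mp (hD hd)
  obtain ⟨a, rfl⟩ := mem_span_singleton.mp hy
  rw [mem_comap, LinearMap.mulLeft_apply]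
  convert add_mem (hh _ (mul_mem_mul hc hw)) ((C * W).smul_mem a (hgh c hc)) using 1
  simp only [mul_add, mul_smul_comm]
  congr 2
  ring

end Stabilizer

end Submodule

namespace Subalgebra

variable {K ι : Type*} [Field K] (H : Subalgebra K (ι → K))

def blockSetoid : Setoid ι where
  r i j := ∀ h ∈ H, h i = h j
  iseqv := ⟨fun _ _ _ ↦ rfl, fun hij h hh ↦ (hij h hh).symm,
    fun hij hjk h hh ↦ (hij h hh).trans (hjk h hh)⟩

noncomputable def blockIndicator (q : Quotient H.blockSetoid) : ι → K :=
  {i | Quotient.mk _ i = q}.indicator 1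

variable {H}

theorem blockIndicator_apply_of_mk_eq {q : Quotient H.blockSetoid} {i : ι}
    (hi : Quotient.mk _ i = q) : H.blockIndicator q i = 1 :=
  Set.indicator_of_mem (s := {i | Quotient.mk _ i = q}) hi _

theorem blockIndicator_apply_of_mk_ne {q : Quotient H.blockSetoid} {i : ι}
    (hi : Quotient.mk _ i ≠ q) : H.blockIndicator q i = 0 :=
  Set.indicator_of_notMem (s := {i | Quotient.mk _ i = q}) hi _

theorem exists_mem_eq_one_on_block (q : Quotient H.blockSetoid) (j : ι) :
    ∃ g ∈ H, (∀ k, Quotient.mk _ k = q → g k = 1) ∧ (Quotient.mk _ j ≠ q → g j = 0) := by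
  by_cases hj : Quotient.mk _ j = q
  · exact ⟨1, H.one_mem, fun _ _ ↦ rfl, fun h ↦ absurd hj h⟩
  obtain ⟨h, hh, hne⟩ : ∃ h ∈ H, h q.out ≠ h j := by
    by_contra! hsep
    exact hj (q.out_eq ▸ Quotient.sound (s := H.blockSetoid) hsep).symm
  refine ⟨(h q.out - h j)⁻¹ • (h - algebraMap K _ (h j)), ?_, fun k hk ↦ ?_, fun _ ↦ ?_⟩
  · exact H.smul_mem (H.sub_mem hh (H.algebraMap_mem _)) _
  · have hkq : h k = h q.out := Quotient.exact (hk.trans q.out_eq.symm) h hh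
    simp [hkq, inv_mul_cancel₀ (sub_ne_zero.mpr hne)]
  · simp

/-- Lagrange interpolation: a product of elements of `H`, each equal to `1` on the block and
vanishing at one coordinate outside it. -/
theorem blockIndicator_mem [Fintype ι] (q : Quotient H.blockSetoid) :
    H.blockIndicator q ∈ H := by
  choose g hgH hg₁ hg₀ using exists_mem_eq_one_on_block (H := H) q
  convert H.prod_mem fun j (_ : j ∈ Finset.univ) ↦ hgH j
  funext k
  rw [Finset.prod_apply]
  by_cases hk : Quotient.mk _ k = q
  · rw [blockIndicator_apply_of_mk_eq hk, Finset.prod_eq_one fun j _ ↦ hg₁ j k hk]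
  · rw [blockIndicator_apply_of_mk_ne hk]
    exact (Finset.prod_eq_zero (f := fun j ↦ g j k) (Finset.mem_univ k) (hg₀ k hk)).symm

theorem mul_blockIndicator {h : ι → K} (hh : h ∈ H) (q : Quotient H.blockSetoid) :
    h * H.blockIndicator q = h q.out • H.blockIndicator q := by
  funext i
  by_cases hi : Quotient.mk _ i = q
  · have : h i = h q.out := Quotient.exact (hi.trans q.out_eq.symm) h hh
    simp [blockIndicator_apply_of_mk_eq hi, this]
  · simp [blockIndicator_apply_of_mk_ne hi]

theorem sum_blockIndicator_mul_apply [Fintype (Quotient H.blockSetoid)]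
    (m : Quotient H.blockSetoid → ι → K) (i : ι) :
    (∑ q, H.blockIndicator q * m q) i = m (Quotient.mk _ i) i := by
  rw [Finset.sum_apply, Finset.sum_eq_single (Quotient.mk _ i)]
  · simp [blockIndicator_apply_of_mk_eq rfl]
  · exact fun q _ hq ↦ by simp [blockIndicator_apply_of_mk_ne (Ne.symm hq)]
  · simp

theorem sum_blockIndicator [Fintype (Quotient H.blockSetoid)] :
    ∑ q, H.blockIndicator q = 1 := by
  funext i
  simpa using sum_blockIndicator_mul_apply (H := H) 1 i

theorem blockIndicator_mul_sum [Fintype (Quotient H.blockSetoid)]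
    (m : Quotient H.blockSetoid → ι → K) (q : Quotient H.blockSetoid) :
    H.blockIndicator q * ∑ q', H.blockIndicator q' * m q' = H.blockIndicator q * m q := by
  funext i
  rw [Pi.mul_apply, sum_blockIndicator_mul_apply]
  by_cases hi : Quotient.mk _ i = q
  · simp [hi]
  · simp [blockIndicator_apply_of_mk_ne hi]

variable [Fintype ι] (H)

/-- `toSubmodule H ⊓ N / M` is the annihilator in `H` of the `H`-module `M / N`. -/
theorem finrank_add_finrank_le_finrank_add_finrank_inf_div {M N : Submodule K (ι → K)}
    (hNM : N ≤ M) (hM : toSubmodule H * M ≤ M) (hN : toSubmodule H * N ≤ N) :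
    finrank K (toSubmodule H) + finrank K N ≤
      finrank K M + finrank K ↥(toSubmodule H ⊓ N / M) := by
  classical
  set e := H.blockIndicator
  have hchoice : ∀ q, ∃ m ∈ M, e q * m ∈ N → ∀ m' ∈ M, e q * m' ∈ N := by
    intro q
    by_cases h : ∀ m' ∈ M, e q * m' ∈ N
    · exact ⟨0, M.zero_mem, fun _ ↦ h⟩
    · push Not at h
      obtain ⟨m, hm, hmN⟩ := h
      exact ⟨m, hm, fun h' ↦ absurd h' hmN⟩
  choose m hmM hm using hchoice
  -- `x` meets every block in which `M` is not already inside `N`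
  set x := ∑ q, e q * m q
  have hxM : x ∈ M := M.sum_mem fun q _ ↦ hM (mul_mem_mul (H.blockIndicator_mem q) (hmM q))
  set φ := N.mkQ ∘ₗ LinearMap.mulRight K x
  have hker : toSubmodule H ⊓ LinearMap.ker φ ≤ toSubmodule H ⊓ N / M := by
    rintro h ⟨hh, hhx⟩
    replace hhx : h * x ∈ N := by simpa [φ] using hhx
    refine ⟨hh, mem_div_iff_forall_mul_mem.mpr fun m' hm' ↦ ?_⟩
    rw [← mul_one (h * m'), ← H.sum_blockIndicator, Finset.mul_sum]
    refine N.sum_mem fun q _ ↦ ?_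
    have hcomm : h * m' * e q = h q.out • (e q * m') := by
      rw [mul_right_comm, H.mul_blockIndicator hh, smul_mul_assoc]
    rw [hcomm]
    by_cases hc : h q.out = 0
    · simp [hc]
    refine N.smul_mem _ (hm q ?_ m' hm')
    have hqx : e q * (h * x) = h q.out • (e q * m q) := by
      rw [mul_left_comm, H.blockIndicator_mul_sum, ← mul_assoc, H.mul_blockIndicator hh,
        smul_mul_assoc]
    have hqxN := hN (mul_mem_mul (H.blockIndicator_mem q) hhx)
    rw [hqx] at hqxN
    simpa [hc] using N.smul_mem (h q.out)⁻¹ hqxN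
  have hrange : (toSubmodule H).map φ ≤ M.map N.mkQ := by
    rintro _ ⟨h, hh, rfl⟩
    exact ⟨h * x, hM (mul_mem_mul hh hxM), rfl⟩
  have hH := (toSubmodule H).finrank_map_add_finrank_inf_ker φ
  have hMN := M.finrank_map_add_finrank_inf_ker N.mkQ
  rw [ker_mkQ, inf_eq_right.mpr hNM] at hMN
  have := finrank_mono hrange
  have := finrank_mono hker
  omega

end Subalgebra

namespace Submodule

variable {K ι : Type*} [Field K]

theorem exists_mem_apply_ne_zero_of_mem_mul {C D : Submodule K (ι → K)} {e : ι → K} {i : ι}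
    (he : e ∈ C * D) (hei : e i ≠ 0) : ∃ d ∈ D, d i ≠ 0 := by
  by_contra! hD
  refine hei (mul_le.mpr (fun c _ d hd ↦ ?_) he : e ∈ LinearMap.ker (LinearMap.proj i))
  simp [hD d hd]

variable [Fintype ι]

theorem finrank_add_finrank_le_of_mul_eq_bot {C D : Submodule K (ι → K)} (h : C * D = ⊥) :
    finrank K C + finrank K D ≤ finrank K ↥(C * D) + finrank K ↥(C * D / (C * D)) := by
  have hCD : C ⊓ D = ⊥ := by
    refine eq_bot_iff.mpr fun x ⟨hxC, hxD⟩ ↦ (mem_bot K).mpr (funext fun i ↦ ?_)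
    have hxx : x * x = 0 := (mem_bot K).mp (h ▸ mul_mem_mul hxC hxD)
    exact mul_self_eq_zero.mp (congrFun hxx i)
  have hdiv : (⊥ : Submodule K (ι → K)) / ⊥ = ⊤ :=
    eq_top_iff.mpr fun x _ y hy ↦ by simp [(mem_bot K).mp hy]
  have := finrank_sup_add_finrank_inf_eq C D
  rw [hCD, finrank_bot] at this
  rw [h, hdiv, finrank_bot, finrank_top]
  have := (C ⊔ D).finrank_le
  omega

theorem finrank_add_finrank_add_one_le_of_mul_lt {C D W : Submodule K (ι → K)} {g : ι → K}
    (hg : g ∈ D) (hD : D ≤ W ⊔ K ∙ g) (hlt : C * W < C * D)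
    (hW : finrank K ↥(C * W / (C * W) * C) + finrank K W ≤
      finrank K ↥(C * W) + finrank K ↥(C * W / (C * W))) :
    finrank K C + finrank K W + 1 ≤ finrank K ↥(C * D) + finrank K ↥(C * D / (C * D)) := by
  set E₁ := C * W
  set H := E₁.stabilizerSubalgebra
  have hH : Subalgebra.toSubmodule H = E₁ / E₁ := toSubmodule_stabilizerSubalgebra E₁
  set M := E₁ / E₁ * C
  set N := M ⊓ E₁.comap (LinearMap.mulLeft K g)
  have hCM : C ≤ M := by simpa using mul_le_mul' (one_le.mpr H.one_mem) (le_refl C)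
  have hHM : E₁ / E₁ * M ≤ M := by
    rw [← mul_assoc, ← hH, H.isIdempotentElem_toSubmodule.eq, hH]
  have hHN : E₁ / E₁ * N ≤ N := mul_le.mpr fun h hh m hm ↦
    ⟨hHM (mul_mem_mul hh hm.1), by simpa [mul_left_comm g h m] using hh _ hm.2⟩
  have hrank : finrank K E₁ + finrank K C ≤
      finrank K ↥(C * D) + finrank K ↥(C ⊓ E₁.comap (LinearMap.mulLeft K g)) :=
    finrank_add_finrank_le_of_map_le _ hlt.le <| map_le_iff_le_comap.mpr fun c hc ↦ by
      simpa [mul_comm] using mul_mem_mul hc hg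
  have hCN : finrank K ↥(C ⊓ E₁.comap (LinearMap.mulLeft K g)) ≤ finrank K N :=
    finrank_mono (inf_le_inf_right _ hCM)
  have hfaith := H.finrank_add_finrank_le_finrank_add_finrank_inf_div (N := N) inf_le_left
    (by rwa [hH]) (by rwa [hH])
  rw [hH] at hfaith
  have hann : E₁ / E₁ ⊓ N / M < C * D / (C * D) := by
    refine lt_of_le_of_lt (fun h ⟨hh, hhN⟩ ↦ ?_) (div_lt_div_self hlt)
    exact mem_div_mul_of_le_sup_span_singleton hD hh fun c hc ↦ (hhN c (hCM hc)).2
  have := finrank_lt_finrank_of_lt hann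
  omega

theorem finrank_add_finrank_le_finrank_mul_add_finrank_div (C D : Submodule K (ι → K)) :
    finrank K C + finrank K D ≤ finrank K ↥(C * D) + finrank K ↥(C * D / (C * D)) := by
  induction hd : finrank K D using Nat.strong_induction_on generalizing C D with
  | _ d ih =>
  subst hd
  rcases eq_or_ne (C * D) ⊥ with hE | hE
  · exact finrank_add_finrank_le_of_mul_eq_bot hE
  obtain ⟨e, heE, he⟩ := exists_mem_ne_zero_of_ne_bot hE
  obtain ⟨i, hei⟩ := Function.ne_iff.mp he
  obtain ⟨g, hgD, hgi⟩ := exists_mem_apply_ne_zero_of_mem_mul heE hei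
  set W := D ⊓ LinearMap.ker (LinearMap.proj i : (ι → K) →ₗ[K] K)
  have hW : finrank K W + 1 = finrank K D := finrank_inf_ker_add_one _ hgD hgi
  have hlt : C * W < C * D := by
    refine SetLike.lt_iff_le_and_exists.mpr
      ⟨mul_le_mul' le_rfl inf_le_left, e, heE, fun heW ↦ ?_⟩
    refine hei (mul_le.mpr (fun c _ w hw ↦ ?_) heW : e ∈ LinearMap.ker (LinearMap.proj i))
    simp [show w i = 0 from hw.2]
  have hIH := ih _ (by omega) (C * W / (C * W) * C) W rfl
  rw [mul_assoc, div_self_mul_self] at hIH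
  have := finrank_add_finrank_add_one_le_of_mul_lt (W := W) hgD
    (le_inf_ker_sup_span_singleton _ hgD hgi) hlt hIH
  omega

end Submodule

theorem schurMul_eq_mul {K : Type*} [Field K] {n : ℕ} (C D : Submodule K (Fin n → K)) :
    schurMul C D = C * D := by
  rw [schurMul, mul_eq_span_mul_set]
  congr 1
  ext x
  simp [Set.mem_mul, eq_comm]

theorem stab_eq_div {K : Type*} [Field K] {n : ℕ} (E : Submodule K (Fin n → K)) :
    stab E = E / E :=
  rfl

theorem statement4_general (K : Type*) [Field K] (n : ℕ) (C D : Submodule K (Fin n → K)) :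
    Module.finrank K ↥C + Module.finrank K ↥D ≤
      Module.finrank K ↥(schurMul C D) + Module.finrank K ↥(stab (schurMul C D)) := by
  rw [stab_eq_div, schurMul_eq_mul]
  exact finrank_add_finrank_le_finrank_mul_add_finrank_div C D

/-- Kneser's theorem for codes:
`dim (C*D) ≥ dim C + dim D − dim St(C*D)` for nonzero subspaces `C, D ⊆ K^n`. -/
theorem statement4 (K : Type*) [Field K] (n : ℕ) (C D : Submodule K (Fin n → K))
    (hC : C ≠ ⊥) (hD : D ≠ ⊥) :
    Module.finrank K ↥C + Module.finrank K ↥D ≤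
      Module.finrank K ↥(schurMul C D) + Module.finrank K ↥(stab (schurMul C D)) :=
  statement4_general K n C D
end

section
/- Let F be a field and C ⊆ F^n a full-support linear subspace. Then C decomposes as C = C₁ ⊕ ⋯ ⊕ C_m where m = dim St(C) and the supports of C₁,…,C_m are non-empty and partition [n]. -/
open Submodule

section Aux

variable {K : Type*} [Field K] {n : ℕ} (C : Submodule K (Fin n → K))

lemma one_mem_stab : (1 : Fin n → K) ∈ stab C := fun e he => by simpa using he

lemma mul_mem_stab {x y : Fin n → K} (hx : x ∈ stab C) (hy : y ∈ stab C) :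
    x * y ∈ stab C := fun e he => by rw [mul_assoc]; exact hx _ (hy e he)

/-- The relation `i ~ j` iff every element of `stab C` agrees at `i` and `j`. -/
def srel : Setoid (Fin n) :=
  ⟨fun i j => ∀ x ∈ stab C, x i = x j,
   ⟨fun _ _ _ => rfl, fun h x hx => (h x hx).symm,
    fun h1 h2 x hx => (h1 x hx).trans (h2 x hx)⟩⟩

open scoped Classical in
/-- The indicator vector of each equivalence class lies in `stab C`. -/
lemma exists_indicator (i : Fin n) :
    ∃ e ∈ stab C, ∀ k, e k = if (srel C).r i k then (1 : K) else 0 := by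
  classical
  have hch : ∀ k : Fin n, ¬ (srel C).r i k → ∃ x ∈ stab C, x i ≠ x k := by
    intro k hk
    by_contra h
    push_neg at h
    exact hk fun x hx => h x hx
  choose x hxmem hxne using hch
  set y : Fin n → Fin n → K := fun k =>
    if h : (srel C).r i k then 1
    else (x k h i - x k h k)⁻¹ • (x k h - x k h k • (1 : Fin n → K)) with hy
  have hymem : ∀ k, y k ∈ stab C := by
    intro k
    by_cases h : (srel C).r i k
    · simp only [hy, dif_pos h]; exact one_mem_stab C
    · simp only [hy, dif_neg h]
      exact (stab C).smul_mem _ ((stab C).sub_mem (hxmem k h)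
        ((stab C).smul_mem _ (one_mem_stab C)))
  have hyi : ∀ k, y k i = 1 := by
    intro k
    by_cases h : (srel C).r i k
    · simp [hy, dif_pos h]
    · have hd : x k h i - x k h k ≠ 0 := sub_ne_zero.mpr (hxne k h)
      simp only [hy, dif_neg h, Pi.smul_apply, Pi.sub_apply, Pi.one_apply, smul_eq_mul,
        mul_one]
      exact inv_mul_cancel₀ hd
  have hyk : ∀ k, ¬ (srel C).r i k → y k k = 0 := by
    intro k h
    simp [hy, dif_neg h]
  refine ⟨∏ k ∈ Finset.univ.filter (fun k => ¬ (srel C).r i k), y k, ?_, ?_⟩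
  · refine Finset.prod_induction y (· ∈ stab C) (fun a b ha hb => mul_mem_stab C ha hb)
      (one_mem_stab C) fun k _ => hymem k
  · intro j
    rw [Finset.prod_apply]
    by_cases hj : (srel C).r i j
    · rw [if_pos hj]
      refine Finset.prod_eq_one fun k _ => ?_
      rw [← hj (y k) (hymem k)]; exact hyi k
    · rw [if_neg hj]
      exact Finset.prod_eq_zero (Finset.mem_filter.mpr ⟨Finset.mem_univ j, hj⟩) (hyk j hj)

end Aux

/-- a full-support subspace decomposes as a direct sum of
`m = dim St(C)` subspaces whose supports are nonempty and partition `[n]`. -/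
theorem statement6 (K : Type*) [Field K] (n : ℕ) (C : Submodule K (Fin n → K))
    (hfull : suppS C = Set.univ) :
    ∃ Cs : Fin (Module.finrank K ↥(stab C)) → Submodule K (Fin n → K),
      (∀ i, (suppS (Cs i)).Nonempty) ∧
      (∀ i j, i ≠ j → Disjoint (suppS (Cs i)) (suppS (Cs j))) ∧
      (⋃ i, suppS (Cs i)) = Set.univ ∧
      C = ⨆ i, Cs i := by
  classical
  letI s : Setoid (Fin n) := srel C
  haveI : Finite (Quotient s) := Quotient.finite _
  haveI : Fintype (Quotient s) := Fintype.ofFinite _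
  choose ev hevmem hevval using exists_indicator C
  -- class indicator vectors
  set eQ : Quotient s → (Fin n → K) := fun q => ev q.out with heQ
  have heQmem : ∀ q, eQ q ∈ stab C := fun q => hevmem _
  have heQval : ∀ (q : Quotient s) (k : Fin n),
      eQ q k = if Quotient.mk s k = q then (1 : K) else 0 := by
    intro q k
    show ev q.out k = _
    rw [hevval]
    congr 1
    simp only [eq_iff_iff]
    constructor
    · intro h
      rw [← q.out_eq]
      exact Quotient.sound (s.symm h)
    · intro h
      exact s.symm (Quotient.exact (h.trans q.out_eq.symm))
  -- linear equivalence between `stab C` and functions on classes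
  let φ : ↥(stab C) →ₗ[K] (Quotient s → K) :=
    { toFun := fun x q => (x : Fin n → K) q.out
      map_add' := fun a b => rfl
      map_smul' := fun c a => rfl }
  let ψ : (Quotient s → K) →ₗ[K] ↥(stab C) :=
    { toFun := fun c => ∑ q, c q • (⟨eQ q, heQmem q⟩ : ↥(stab C))
      map_add' := by
        intro a b
        simp only [Pi.add_apply, add_smul]
        exact Finset.sum_add_distrib
      map_smul' := by
        intro c a
        simp only [Pi.smul_apply, smul_eq_mul, mul_smul, RingHom.id_apply]
        exact (Finset.smul_sum).symm }
  have h1 : φ.comp ψ = LinearMap.id := by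
    apply LinearMap.ext
    intro c
    funext q
    simp only [LinearMap.comp_apply, LinearMap.id_apply, LinearMap.coe_mk, AddHom.coe_mk, φ, ψ]
    rw [AddSubmonoidClass.coe_finset_sum]
    rw [Finset.sum_apply]
    have : ∀ q' : Quotient s,
        ((c q' • (⟨eQ q', heQmem q'⟩ : ↥(stab C)) : ↥(stab C)) : Fin n → K) q.out
          = if q = q' then c q' else 0 := by
      intro q'
      simp only [SetLike.val_smul, Pi.smul_apply, smul_eq_mul, heQval, q.out_eq]
      by_cases h : q = q' <;> simp [h, eq_comm]
    rw [Finset.sum_congr rfl fun q' _ => this q']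
    simp
  have h2 : ψ.comp φ = LinearMap.id := by
    apply LinearMap.ext
    intro x
    apply Subtype.ext
    simp only [LinearMap.comp_apply, LinearMap.id_apply, LinearMap.coe_mk, AddHom.coe_mk, φ, ψ]
    rw [AddSubmonoidClass.coe_finset_sum]
    funext j
    rw [Finset.sum_apply]
    have : ∀ q : Quotient s,
        ((((x : Fin n → K) q.out) • (⟨eQ q, heQmem q⟩ : ↥(stab C)) : ↥(stab C)) : Fin n → K) j
          = if Quotient.mk s j = q then (x : Fin n → K) q.out else 0 := by
      intro q
      simp only [SetLike.val_smul, Pi.smul_apply, smul_eq_mul, heQval]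
      by_cases h : Quotient.mk s j = q <;> simp [h]
    rw [Finset.sum_congr rfl fun q _ => this q]
    rw [Finset.sum_ite_eq Finset.univ (Quotient.mk s j) (fun q => (x : Fin n → K) q.out)]
    simp only [Finset.mem_univ, if_pos]
    have hrel : s.r (Quotient.mk s j).out j := Quotient.mk_out j
    exact hrel (x : Fin n → K) x.2
  have hcard : Fintype.card (Quotient s) = Module.finrank K ↥(stab C) := by
    have := LinearEquiv.finrank_eq (LinearEquiv.ofLinear ψ φ h2 h1)
    rw [Module.finrank_fintype_fun_eq_card] at this
    exact this
  let σ : Fin (Module.finrank K ↥(stab C)) ≃ Quotient s :=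
    (Fintype.equivFinOfCardEq hcard).symm
  refine ⟨fun i => C.map (LinearMap.mulLeft K (eQ (σ i))), ?_, ?_, ?_, ?_⟩
  · -- nonempty supports
    intro i
    set j := (σ i).out with hj
    have hjC : j ∈ suppS C := hfull ▸ Set.mem_univ j
    obtain ⟨v, hv, hvj⟩ := hjC
    refine ⟨j, eQ (σ i) * v, ⟨v, hv, rfl⟩, ?_⟩
    have : eQ (σ i) j = 1 := by rw [heQval, if_pos]; exact (σ i).out_eq
    simp only [Pi.mul_apply, this, one_mul]
    exact hvj
  · -- disjoint supports
    intro i i' hne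
    have key : ∀ i'' (j : Fin n),
        j ∈ suppS (C.map (LinearMap.mulLeft K (eQ (σ i'')))) → Quotient.mk s j = σ i'' := by
      intro i'' j hjmem
      obtain ⟨w, ⟨v, hv, rfl⟩, hwj⟩ := hjmem
      by_contra h
      apply hwj
      have : eQ (σ i'') j = 0 := by rw [heQval, if_neg h]
      simp [LinearMap.mulLeft_apply, this]
    rw [Set.disjoint_left]
    intro j hji hji'
    exact hne (σ.injective ((key i j hji).symm.trans (key i' j hji')))
  · -- union of supports is everything
    apply Set.eq_univ_of_forall
    intro j
    refine Set.mem_iUnion.mpr ⟨σ.symm (Quotient.mk s j), ?_⟩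
    have hjC : j ∈ suppS C := hfull ▸ Set.mem_univ j
    obtain ⟨v, hv, hvj⟩ := hjC
    refine ⟨eQ (σ (σ.symm (Quotient.mk s j))) * v, ⟨v, hv, rfl⟩, ?_⟩
    have : eQ (σ (σ.symm (Quotient.mk s j))) j = 1 := by
      rw [heQval, if_pos]; rw [Equiv.apply_symm_apply]
    simp only [Pi.mul_apply, this, one_mul]
    exact hvj
  · -- the decomposition
    apply le_antisymm
    · intro v hv
      have hdecomp : v = ∑ i, eQ (σ i) * v := by
        funext j
        rw [Finset.sum_apply]
        have : ∀ i, (eQ (σ i) * v) j = if i = σ.symm (Quotient.mk s j) then v j else 0 := by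
          intro i
          simp only [Pi.mul_apply, heQval]
          by_cases h : Quotient.mk s j = σ i
          · rw [if_pos h, if_pos, one_mul]
            exact ((σ.symm_apply_eq).mpr h).symm
          · rw [if_neg h, if_neg, zero_mul]
            intro hc
            exact h (by rw [hc, Equiv.apply_symm_apply])
        rw [Finset.sum_congr rfl fun i _ => this i]
        rw [Finset.sum_ite_eq' Finset.univ (σ.symm (Quotient.mk s j)) (fun _ => v j)]
        simp
      rw [hdecomp]
      refine Submodule.sum_mem _ fun i _ => ?_
      refine Submodule.mem_iSup_of_mem i ?_
      exact ⟨v, hv, rfl⟩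
    · refine iSup_le fun i => ?_
      rintro w ⟨v, hv, rfl⟩
      exact heQmem (σ i) v hv
end

section
/- Let V ⊆ F_p^n be a linear subspace spanned by {0,1}-vectors. Then the number of {0,1}-vectors contained in V is at most 2^(dim V). -/
open Submodule

/-- a subspace of `F_p^n` spanned by {0,1}-vectors contains at most
`2 ^ dim V` vectors with all coordinates in {0,1}. -/
theorem statement10 (p n : ℕ) [Fact p.Prime] (S : Set (Fin n → ZMod p))
    (hS : ∀ v ∈ S, ∀ i, v i = 0 ∨ v i = 1)
    (V : Submodule (ZMod p) (Fin n → ZMod p)) (hV : V = Submodule.span (ZMod p) S) :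
    Set.ncard {v | v ∈ V ∧ ∀ i, v i = 0 ∨ v i = 1} ≤
      2 ^ Module.finrank (ZMod p) ↥V := by
  classical
  set K := ZMod p
  set φ : Fin n → Module.Dual K V := fun i => (LinearMap.proj i).comp V.subtype with hφ
  obtain ⟨t, hts, hspan, hli⟩ := exists_linearIndependent K (Set.range φ)
  have hfin : t.Finite := hli.setFinite
  haveI := hfin.fintype
  -- dualCoannihilator of span of all coordinate functionals is ⊥
  have hcoann : (span K (Set.range φ)).dualCoannihilator = ⊥ := by
    rw [eq_bot_iff]
    intro x hx
    rw [← SetLike.mem_coe, coe_dualCoannihilator_span] at hx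
    have hx0 : ∀ i, (x : Fin n → K) i = 0 := fun i => hx (φ i) ⟨i, rfl⟩
    simpa using Subtype.ext (funext hx0)
  have hrank : Module.finrank K ↥(span K (Set.range φ)) = Module.finrank K ↥V := by
    have := Subspace.finrank_add_finrank_dualCoannihilator_eq (span K (Set.range φ))
    rw [hcoann, finrank_bot] at this
    simpa using this
  have hcard : t.toFinset.card = Module.finrank K ↥V := by
    rw [← finrank_span_set_eq_card hli, hspan, hrank]
  -- the injection
  set T := {v | v ∈ V ∧ ∀ i, v i = 0 ∨ v i = 1} with hT
  have : Nat.card ↥T ≤ Nat.card (↥t → Bool) := by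
    apply Nat.card_le_card_of_injective
      (fun (v : ↥T) (f : ↥t) => decide ((f.1 : Module.Dual K ↥V) ⟨v.1, v.2.1⟩ = 1))
    intro v w h
    have key : ∀ f ∈ t, f (⟨v.1, v.2.1⟩ - ⟨w.1, w.2.1⟩ : V) = 0 := by
      intro f hf
      obtain ⟨i, rfl⟩ := hts hf
      have hvw : (decide ((v.1 : Fin n → K) i = 1)) = (decide ((w.1 : Fin n → K) i = 1)) := by
        have := congrFun h ⟨φ i, hf⟩
        simpa [hφ] using this
      rw [decide_eq_decide] at hvw
      have hvi := v.2.2 i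
      have hwi := w.2.2 i
      have : (v.1 : Fin n → K) i = (w.1 : Fin n → K) i := by
        rcases hvi with h1 | h1 <;> rcases hwi with h2 | h2 <;>
          simp_all
      simp [hφ, map_sub, this]
    have : (⟨v.1, v.2.1⟩ - ⟨w.1, w.2.1⟩ : V) ∈ (span K t).dualCoannihilator := by
      rw [← SetLike.mem_coe, coe_dualCoannihilator_span]
      exact key
    rw [hspan, hcoann, Submodule.mem_bot, sub_eq_zero] at this
    exact Subtype.ext (show v.1 = w.1 by simpa [Subtype.ext_iff] using this)
  calc Set.ncard T = Nat.card ↥T := rfl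
    _ ≤ Nat.card (↥t → Bool) := this
    _ = 2 ^ Module.finrank K ↥V := by
        rw [Nat.card_eq_fintype_card, Fintype.card_fun, ← hcard]
        simp [Set.toFinset_card]
end

section
/- Let r be a positive integer, F a field, F ⊆ 2^[n] a set family, and V the F-span of the characteristic vectors of F. Suppose V^⟨r⟩ = C₁ ⊕ ⋯ ⊕ C_m where the C_i are nonzero subspaces with pairwise disjoint supports. If dim C_i = 1, then supp(C_i) is an atom of F. -/
open Submodule

/-!
A one-dimensional summand is `C i = K ∙ v`. For `B ∈ ℱ` the characteristic vector `χ_B` lies in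
every Schur power (`χ_B * χ_B = χ_B`), and restricting it to `supp v` projects it onto `C i`, so
that restriction is `c • v`: hence `supp v` lies inside `B` (if `c ≠ 0`) or misses it. For
maximality, if no member of `ℱ` separates a coordinate `j` from some `a ∈ supp v`, then
`x j = x a` holds for every `χ_B`, and this linear condition is closed under coordinatewise
products, so it holds on all of `V^⟨r⟩`; in particular `v j = v a ≠ 0`.
-/

open Function

lemma exists_eq_span_singleton_of_finrank_eq_one {K V : Type*} [Field K] [AddCommGroup V]
    [Module K V] {S : Submodule K V} (h : Module.finrank K S = 1) : ∃ v ≠ 0, S = K ∙ v := by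
  obtain ⟨v, hvS, hv⟩ := exists_mem_ne_zero_of_ne_bot fun hS : S = ⊥ => by subst hS; simp at h
  exact ⟨v, hv, eq_span_singleton_of_mem_of_finrank_eq_one h hvS hv⟩

section CommRing

variable {K : Type*} [CommRing K] {n : ℕ}

lemma suppS_span_singleton (v : Fin n → K) : suppS (K ∙ v) = support v := by
  ext j
  refine ⟨?_, fun hj => ⟨v, mem_span_singleton_self v, hj⟩⟩
  rintro ⟨w, hw, hwj⟩
  obtain ⟨c, rfl⟩ := mem_span_singleton.mp hw
  exact right_ne_zero_of_mul hwj

lemma support_subset_suppS {C : Submodule K (Fin n → K)} {x : Fin n → K} (hx : x ∈ C) :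
    support x ⊆ suppS C :=
  fun _ hj => ⟨x, hx, hj⟩

lemma indicator_suppS_mem_of_mem_iSup {m : ℕ} {C : Fin m → Submodule K (Fin n → K)}
    (hdisj : ∀ i j, i ≠ j → Disjoint (suppS (C i)) (suppS (C j))) (i : Fin m)
    {x : Fin n → K} (hx : x ∈ ⨆ j, C j) : (suppS (C i)).indicator x ∈ C i := by
  suffices ⨆ j, C j ≤ (C i).comap (indicatorMapL (suppS (C i))) from this hx
  refine iSup_le fun j y hy => ?_
  show (suppS (C i)).indicator y ∈ C i
  rcases eq_or_ne j i with rfl | hji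
  · rwa [Set.indicator_eq_self.mpr (support_subset_suppS hy)]
  · rw [Set.indicator_eq_zero'.mpr
      ((hdisj i j hji.symm).mono_right (support_subset_suppS hy)).symm]
    exact zero_mem _

lemma schurPow_le_of_mul_mem {E V : Submodule K (Fin n → K)}
    (hE : ∀ x ∈ E, ∀ y ∈ E, x * y ∈ E) (hV : V ≤ E) (k : ℕ) : schurPow V k ≤ E := by
  induction k with
  | zero => exact hV
  | succ k ih =>
    refine span_le.mpr ?_
    rintro _ ⟨x, hx, y, hy, rfl⟩
    exact hE x (ih hx) y (hV hy)

lemma charVec_mul_self (B : Finset (Fin n)) : charVec K B * charVec K B = charVec K B := by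
  ext j
  by_cases hj : j ∈ B <;> simp [charVec, hj]

variable {ℱ : Set (Finset (Fin n))}

lemma charVec_mem_schurPow {B : Finset (Fin n)} (hB : B ∈ ℱ) (k : ℕ) :
    charVec K B ∈ schurPow (span K (charVec K '' ℱ)) k := by
  induction k with
  | zero => exact subset_span ⟨B, hB, rfl⟩
  | succ k ih =>
    rw [← charVec_mul_self]
    exact subset_span ⟨_, ih, _, subset_span ⟨B, hB, rfl⟩, rfl⟩

lemma apply_eq_of_mem_schurPow {a b : Fin n} (hab : ∀ B ∈ ℱ, a ∈ B ↔ b ∈ B) {k : ℕ}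
    {x : Fin n → K} (hx : x ∈ schurPow (span K (charVec K '' ℱ)) k) : x a = x b := by
  refine schurPow_le_of_mul_mem (E := LinearMap.eqLocus (LinearMap.proj a) (LinearMap.proj b))
    (fun x hx y hy => ?_) (span_le.mpr ?_) k hx
  · simp_all
  · rintro _ ⟨B, hB, rfl⟩
    simp [charVec, hab B hB]

lemma apply_eq_zero_of_mem_schurPow {j : Fin n} (hj : j ∉ famSupp ℱ) {k : ℕ}
    {x : Fin n → K} (hx : x ∈ schurPow (span K (charVec K '' ℱ)) k) : x j = 0 := by
  refine schurPow_le_of_mul_mem (E := LinearMap.ker (LinearMap.proj j))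
    (fun x hx y hy => ?_) (span_le.mpr ?_) k hx
  · simp_all
  · rintro _ ⟨B, hB, rfl⟩
    have hjB : j ∉ B := fun h => hj (Set.mem_biUnion hB h)
    simp [charVec, hjB]

end CommRing

section Field

variable {K : Type*} [Field K] {n : ℕ}

lemma subset_or_disjoint_of_indicator_charVec_mem_span {v : Fin n → K} {B : Finset (Fin n)}
    (h : (support v).indicator (charVec K B) ∈ K ∙ v) :
    support v ⊆ B ∨ Disjoint (support v) B := by
  obtain ⟨c, hc⟩ := mem_span_singleton.mp h
  have hcoord : ∀ a ∈ support v, c * v a = if a ∈ B then 1 else 0 := fun a ha => by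
    simpa [Set.indicator_of_mem ha, charVec] using congrFun hc a
  rcases eq_or_ne c 0 with rfl | hc0
  · refine Or.inr (Set.disjoint_left.mpr fun a ha haB => ?_)
    simpa [Finset.mem_coe.mp haB] using hcoord a ha
  · refine Or.inl fun a ha => Finset.mem_coe.mpr ?_
    by_contra haB
    simpa [haB, hc0, mem_support.mp ha] using hcoord a ha

lemma isAtomOf_of_coe_eq_support {ℱ : Set (Finset (Fin n))} {k : ℕ} {v : Fin n → K}
    (hv : v ≠ 0) (hvW : v ∈ schurPow (span K (charVec K '' ℱ)) k) {A : Finset (Fin n)}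
    (hA : (A : Set (Fin n)) = support v) (hcut : ∀ B ∈ ℱ, A ⊆ B ∨ Disjoint A B) :
    IsAtomOf ℱ A := by
  obtain ⟨a, ha⟩ : A.Nonempty := by
    rw [← Finset.coe_nonempty, hA]
    exact support_nonempty_iff.mpr hv
  have hmem : ∀ {j}, j ∈ A ↔ v j ≠ 0 := fun {j} => by
    rw [← Finset.mem_coe, hA, mem_support]
  refine ⟨⟨a, ha⟩, fun j hj => ?_, hcut, fun A' hAA' _ hcut' => ?_⟩
  · by_contra hjF
    exact hmem.mp hj (apply_eq_zero_of_mem_schurPow hjF hvW)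
  · refine Finset.Subset.antisymm_iff.mpr ⟨fun j hj => hmem.mpr ?_, hAA'⟩
    have hsame : ∀ B ∈ ℱ, a ∈ B ↔ j ∈ B := fun B hB => by
      rcases hcut' B hB with hsub | hdisj
      · exact iff_of_true (hsub (hAA' ha)) (hsub hj)
      · exact iff_of_false (Finset.disjoint_left.mp hdisj (hAA' ha))
          (Finset.disjoint_left.mp hdisj hj)
    rw [← apply_eq_of_mem_schurPow hsame hvW]
    exact hmem.mp ha

end Field

theorem statement15_general (K : Type*) [Field K] (n r : ℕ)
    (ℱ : Set (Finset (Fin n)))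
    (V : Submodule K (Fin n → K))
    (hV : V = Submodule.span K (charVec K '' ℱ))
    (m : ℕ) (C : Fin m → Submodule K (Fin n → K))
    (hdisj : ∀ i j, i ≠ j → Disjoint (suppS (C i)) (suppS (C j)))
    (hdec : schurPow V (r - 1) = ⨆ i, C i)
    (i : Fin m) (hdim : Module.finrank K ↥(C i) = 1) :
    ∃ A : Finset (Fin n), (A : Set (Fin n)) = suppS (C i) ∧ IsAtomOf ℱ A := by
  classical
  subst hV
  obtain ⟨v, hv, hCi⟩ := exists_eq_span_singleton_of_finrank_eq_one hdim
  have hsupp : suppS (C i) = support v := hCi ▸ suppS_span_singleton v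
  have hvW : v ∈ schurPow (span K (charVec K '' ℱ)) (r - 1) :=
    hdec ▸ mem_iSup_of_mem i (hCi ▸ mem_span_singleton_self v)
  refine ⟨(support v).toFinset, by simp [hsupp],
    isAtomOf_of_coe_eq_support hv hvW (by simp) fun B hB => ?_⟩
  have hproj := indicator_suppS_mem_of_mem_iSup hdisj i (hdec ▸ charVec_mem_schurPow hB (r - 1))
  rw [hsupp, hCi] at hproj
  simpa [← Finset.coe_subset, ← Finset.disjoint_coe] using
    subset_or_disjoint_of_indicator_charVec_mem_span hproj

/-- in a decomposition `V^⟨r⟩ = C₁ ⊕ ⋯ ⊕ C_m` into nonzero subspaces with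
pairwise disjoint supports, the support of any one-dimensional summand is an atom of `ℱ`.
(Recall `schurPow V (r-1) = V^⟨r⟩`.) -/
theorem statement15 (K : Type*) [Field K] (n r : ℕ) (hr : 0 < r)
    (ℱ : Set (Finset (Fin n)))
    (V : Submodule K (Fin n → K))
    (hV : V = Submodule.span K (charVec K '' ℱ))
    (m : ℕ) (C : Fin m → Submodule K (Fin n → K))
    (hne : ∀ i, C i ≠ ⊥)
    (hdisj : ∀ i j, i ≠ j → Disjoint (suppS (C i)) (suppS (C j)))
    (hdec : schurPow V (r - 1) = ⨆ i, C i)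
    (i : Fin m) (hdim : Module.finrank K ↥(C i) = 1) :
    ∃ A : Finset (Fin n), (A : Set (Fin n)) = suppS (C i) ∧ IsAtomOf ℱ A :=
  statement15_general K n r ℱ V hV m C hdisj hdec i hdim
end

section
/- Let k, ℓ be positive integers and F ⊆ 2^[n] a k-wise ℓ-divisible family. If A is an atom of F whose cardinality is divisible by ℓ, then the restricted family F|_([n]∖A) = {B ∖ A : B ∈ F} is also k-wise ℓ-divisible. -/
open Submodule

/-- removing an atom of size divisible by `ℓ` from a k-wise ℓ-divisible
family keeps it k-wise ℓ-divisible. -/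
theorem statement18 (n k ℓ : ℕ) (𝓕 : Finset (Finset (Fin n)))
    (hdiv : kWiseDiv n k ℓ 𝓕) (A : Finset (Fin n))
    (hA : IsAtomOf (𝓕 : Set (Finset (Fin n))) A) (hcard : ℓ ∣ A.card) :
    kWiseDiv n k ℓ (𝓕.image (· \ A)) := by
  intro C hC
  choose B hB hBC using fun i => Finset.mem_image.mp (hC i)
  rcases Nat.eq_zero_or_pos k with hk | hk
  · subst hk
    simpa using hdiv Fin.elim0 (fun i => i.elim0)
  have hne : (Finset.univ : Finset (Fin k)).Nonempty := ⟨⟨0, hk⟩, Finset.mem_univ _⟩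
  have key : Finset.univ.inf C = (Finset.univ.inf B) \ A := by
    rw [show C = fun i => B i \ A from funext fun i => (hBC i).symm]
    exact Finset.inf_sdiff_right hne _ _
  rw [key]
  by_cases hall : ∀ i, A ⊆ B i
  · have hsub : A ⊆ Finset.univ.inf B := Finset.le_inf fun i _ => hall i
    rw [Finset.card_sdiff_of_subset hsub]
    exact Nat.dvd_sub (hdiv B hB) hcard
  · push_neg at hall
    obtain ⟨i, hi⟩ := hall
    have hd : Disjoint A (B i) := ((hA.2.2.1 (B i) (hB i)).resolve_left hi)
    have hd2 : Disjoint A (Finset.univ.inf B) :=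
      hd.mono_right (Finset.inf_le (Finset.mem_univ i))
    rw [Finset.sdiff_eq_self_of_disjoint hd2.symm]
    exact hdiv B hB
end
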